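/- arXiv:2206.12460 — 2 statements merged into one kernel-verified Lean document; each statement's English description precedes it below -/
import Mathlib

section
/- Let A be a d×d complex matrix. Then |det(Id + A)| ≤ exp(‖A‖₁), where ‖A‖₁ is the trace norm of A. -/
/-!
Let `w_j` be an orthonormal eigenbasis of `Aᴴ * A`, so that `‖A w_j‖ = σ_j` are the singular
values of `A`. The columns of `(1 + A) * W`, with `W` the unitary matrix of the `w_j`, are
`w_j + A w_j`, of norm at most `1 + σ_j`; Hadamard's inequality then gives
`|det (1 + A)| ≤ ∏ (1 + σ_j) ≤ exp (∑ σ_j)`.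
Hadamard's inequality reduces, after normalising the columns of `B`, to
`det G ≤ exp (tr G - n)` for the Gram matrix `G = Bᴴ * B`, which is `x ≤ exp (x - 1)` applied to
the eigenvalues of `G`.
-/

/-- The operator norm of a matrix acting on Euclidean space `ℂ^d`. -/
noncomputable def opNorm {d : ℕ} (A : Matrix (Fin d) (Fin d) ℂ) : ℝ :=
  ‖Matrix.toEuclideanCLM (𝕜 := ℂ) A‖

/-- The trace norm of a matrix: the sum of its singular values, i.e. the square
roots of the eigenvalues of `Aᴴ * A`. -/
noncomputable def traceNorm {d : ℕ} (A : Matrix (Fin d) (Fin d) ℂ) : ℝ :=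
  ∑ i, Real.sqrt ((Matrix.isHermitian_conjTranspose_mul_self A).eigenvalues i)

open Matrix
open scoped ComplexOrder

namespace Real

theorem prod_le_exp_sum_sub_one {ι : Type*} (s : Finset ι) {x : ι → ℝ}
    (hx : ∀ i, 0 ≤ x i) :
    ∏ i ∈ s, x i ≤ exp (∑ i ∈ s, (x i - 1)) :=
  (Finset.prod_le_prod (fun i _ ↦ hx i) fun i _ ↦ by linarith [add_one_le_exp (x i - 1)]).trans
    (exp_sum s _).symm.le

end Real

namespace Matrix

variable {𝕜 : Type*} [RCLike 𝕜] {n : Type*} [Fintype n]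

theorem re_trace_conjTranspose_mul_self {m : Type*} [Fintype m] (B : Matrix m n 𝕜) :
    RCLike.re (Bᴴ * B).trace = ∑ j, ‖WithLp.toLp 2 (B.col j)‖ ^ 2 := by
  simp [trace, mul_apply, EuclideanSpace.norm_sq_eq, RCLike.conj_mul, col_apply]

variable [DecidableEq n]

theorem PosSemidef.re_det_le_exp_re_trace_sub_card {P : Matrix n n 𝕜} (hP : P.PosSemidef) :
    RCLike.re P.det ≤ Real.exp (RCLike.re P.trace - Fintype.card n) := by
  rw [hP.isHermitian.det_eq_prod_eigenvalues, hP.isHermitian.trace_eq_sum_eigenvalues,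
    ← RCLike.ofReal_prod, ← RCLike.ofReal_sum, RCLike.ofReal_re, RCLike.ofReal_re]
  calc _ ≤ _ := Real.prod_le_exp_sum_sub_one _ hP.eigenvalues_nonneg
    _ = _ := by simp [Finset.sum_sub_distrib]

theorem norm_det_sq_eq_re_det_conjTranspose_mul_self (B : Matrix n n 𝕜) :
    ‖B.det‖ ^ 2 = RCLike.re (Bᴴ * B).det := by
  rw [det_mul, det_conjTranspose, RCLike.star_def, RCLike.conj_mul]
  norm_cast

theorem norm_det_le_one_of_norm_col_le_one {B : Matrix n n 𝕜}
    (h : ∀ j, ‖WithLp.toLp 2 (B.col j)‖ ≤ 1) : ‖B.det‖ ≤ 1 := by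
  have htr : RCLike.re (Bᴴ * B).trace ≤ Fintype.card n := by
    rw [re_trace_conjTranspose_mul_self]
    calc _ ≤ ∑ _j : n, (1 : ℝ) :=
          Finset.sum_le_sum fun j _ ↦ pow_le_one₀ (norm_nonneg _) (h j)
      _ = _ := by simp
  have hsq : ‖B.det‖ ^ 2 ≤ 1 := by
    rw [norm_det_sq_eq_re_det_conjTranspose_mul_self]
    calc _ ≤ _ := (posSemidef_conjTranspose_mul_self B).re_det_le_exp_re_trace_sub_card
      _ ≤ 1 := Real.exp_le_one_iff.mpr (by linarith)
  exact (pow_le_one_iff_of_nonneg (norm_nonneg _) two_ne_zero).mp hsq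

theorem norm_det_le_prod_norm_col (B : Matrix n n 𝕜) :
    ‖B.det‖ ≤ ∏ j, ‖WithLp.toLp 2 (B.col j)‖ := by
  by_cases h0 : ∃ j, B.col j = 0
  · obtain ⟨j, hj⟩ := h0
    rw [det_eq_zero_of_column_eq_zero j (congrFun hj), norm_zero]
    positivity
  push Not at h0
  set r : n → ℝ := fun j ↦ ‖WithLp.toLp 2 (B.col j)‖
  have hr : ∀ j, 0 < r j := fun j ↦ norm_pos_iff.mpr (by simpa using h0 j)
  set C := B * diagonal fun j ↦ ((r j)⁻¹ : 𝕜)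
  have hBC : B = C * diagonal fun j ↦ (r j : 𝕜) := by
    rw [mul_assoc, diagonal_mul_diagonal]
    simp [fun j ↦ (hr j).ne']
  have hC : ‖C.det‖ ≤ 1 := norm_det_le_one_of_norm_col_le_one fun j ↦ by
    have : WithLp.toLp 2 (C.col j) = ((r j)⁻¹ : 𝕜) • WithLp.toLp 2 (B.col j) := by
      ext i; simp [C, col_apply, mul_comm]
    rw [this, norm_smul, norm_inv, RCLike.norm_ofReal, abs_of_pos (hr j),
      inv_mul_cancel₀ (hr j).ne']
  calc ‖B.det‖ = ‖C.det‖ * ∏ j, r j := by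
        rw [hBC, det_mul, norm_mul, det_diagonal, norm_prod]
        simp [abs_of_pos (hr _)]
    _ ≤ ∏ j, r j := mul_le_of_le_one_left (Finset.prod_nonneg fun j _ ↦ (hr j).le) hC

theorem norm_mulVec_eigenvectorBasis_conjTranspose_mul_self (A : Matrix n n 𝕜) (j : n) :
    ‖WithLp.toLp 2 (A *ᵥ (isHermitian_conjTranspose_mul_self A).eigenvectorBasis j)‖ =
      √((isHermitian_conjTranspose_mul_self A).eigenvalues j) := by
  rw [(isHermitian_conjTranspose_mul_self A).eigenvalues_eq, ← mulVec_mulVec,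
    dotProduct_mulVec, ← star_mulVec, ← dotProduct_comm, ← EuclideanSpace.inner_toLp_toLp,
    ← norm_sq_eq_re_inner]
  simp

theorem norm_det_one_add_le_prod (A : Matrix n n 𝕜) :
    ‖(1 + A).det‖ ≤ ∏ j, (1 + √((isHermitian_conjTranspose_mul_self A).eigenvalues j)) := by
  set hH := isHermitian_conjTranspose_mul_self A
  set W : Matrix n n 𝕜 := ↑hH.eigenvectorUnitary
  have hW : ‖W.det‖ = 1 :=
    CStarRing.norm_of_mem_unitary (det_of_mem_unitary hH.eigenvectorUnitary.2)
  have hcol (j : n) : ‖WithLp.toLp 2 (((1 + A) * W).col j)‖ ≤ 1 + √(hH.eigenvalues j) := by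
    have : WithLp.toLp 2 (((1 + A) * W).col j) =
        hH.eigenvectorBasis j + WithLp.toLp 2 (A *ᵥ hH.eigenvectorBasis j) := by
      ext i; simp [W, add_mul, col_apply, mul_apply, mulVec, dotProduct]
    rw [this, ← norm_mulVec_eigenvectorBasis_conjTranspose_mul_self,
      ← hH.eigenvectorBasis.orthonormal.1 j]
    exact norm_add_le _ _
  calc ‖(1 + A).det‖ = ‖((1 + A) * W).det‖ := by
        rw [det_mul, norm_mul, hW, mul_one]
    _ ≤ ∏ j, ‖WithLp.toLp 2 (((1 + A) * W).col j)‖ := norm_det_le_prod_norm_col _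
    _ ≤ _ := Finset.prod_le_prod (fun _ _ ↦ norm_nonneg _) fun j _ ↦ hcol j

end Matrix

theorem abs_det_one_add_le_exp_traceNorm {d : ℕ} (A : Matrix (Fin d) (Fin d) ℂ) :
    ‖(1 + A).det‖ ≤ Real.exp (traceNorm A) :=
  (norm_det_one_add_le_prod A).trans (Real.prod_one_add_le_exp_sum _ fun _ ↦ Real.sqrt_nonneg _)
end

section
/- Let f be holomorphic on an open set containing the closed disk D(z', 2r) with f(z') ≠ 0. Let n(r) be the number of zeros of f (with multiplicity) in the open disk D(z', r). Then n(r) ≤ (1/ln 2)·(ln max_{|z-z'|=2r} |f(z)| - ln |f(z')|). -/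
/-!
Jensen's formula gives Mathlib's `AnalyticOnNhd.sum_divisor_le`: the divisor of `f` on
`closedBall c r` has total mass at most `log (M / ‖f c‖) / log (R / r)` whenever `1 ≤ M` bounds
`‖f‖` on the sphere of radius `R`. By the maximum modulus principle any such bound satisfies
`M ≥ ‖f c‖ > 0`, so rescaling `f` by `M⁻¹` removes the restriction `1 ≤ M`. The local
factorisations `f w = (w - z) ^ m z * h w` with `h z ≠ 0` identify `m z` with the divisor at `z`.
-/

open Metric MeromorphicOn

section
variable {𝕜 E : Type*} [NontriviallyNormedField 𝕜] [NormedAddCommGroup E] [NormedSpace 𝕜 E]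
  {f : 𝕜 → E} {U : Set 𝕜}

theorem MeromorphicOn.divisor_const_smul {c : 𝕜} (hc : c ≠ 0) (hf : MeromorphicOn f U) :
    divisor (c • f) U = divisor f U := by
  classical
  ext z
  by_cases hz : z ∈ U
  · rw [divisor_apply (hf.const_smul c) hz, divisor_apply hf hz,
      show c • f = (fun _ : 𝕜 ↦ c) • f from rfl,
      meromorphicOrderAt_smul (MeromorphicAt.const c z) (hf z hz)]
    simp [meromorphicOrderAt_const, hc]
  · simp [hz]

theorem AnalyticOnNhd.divisor_apply_eq_natCast (hf : AnalyticOnNhd 𝕜 f U) {z : 𝕜} (hz : z ∈ U)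
    {n : ℕ} (hfz : ∃ g : 𝕜 → E, AnalyticAt 𝕜 g z ∧ g z ≠ 0 ∧
      ∀ᶠ w in nhds z, f w = (w - z) ^ n • g w) :
    divisor f U z = n := by
  rw [hf.divisor_apply hz, ((hf z hz).analyticOrderAt_eq_natCast).mpr hfz]
  rfl

theorem AnalyticOnNhd.sum_le_finsum_divisor (hf : AnalyticOnNhd 𝕜 f U) (hU : IsCompact U)
    {Z : Finset 𝕜} {m : 𝕜 → ℕ} (hm : ∀ z ∈ Z, divisor f U z = m z) :
    ∑ z ∈ Z, (m z : ℤ) ≤ ∑ᶠ u, divisor f U u := by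
  classical
  have hsupp := (divisor f U).finiteSupport hU
  rw [finsum_eq_sum_of_support_subset _ (s := Z ∪ hsupp.toFinset) (by simp)]
  calc ∑ z ∈ Z, (m z : ℤ) = ∑ z ∈ Z, divisor f U z :=
        Finset.sum_congr rfl fun z hz ↦ (hm z hz).symm
    _ ≤ _ := Finset.sum_le_sum_of_subset_of_nonneg Finset.subset_union_left
        fun u _ _ ↦ hf.divisor_nonneg u
end

theorem Complex.norm_le_of_forall_mem_sphere_norm_le {F : Type*} [NormedAddCommGroup F]
    [NormedSpace ℂ F] {f : ℂ → F} {c : ℂ} {R M : ℝ} (hR : 0 < R)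
    (hf : DifferentiableOn ℂ f (closedBall c R)) (hM : ∀ z ∈ sphere c R, ‖f z‖ ≤ M) :
    ‖f c‖ ≤ M :=
  Complex.norm_le_of_forall_mem_frontier_norm_le isBounded_ball
    (DifferentiableOn.diffContOnCl (by rwa [closure_ball c hR.ne']))
    (by rwa [frontier_ball c hR.ne']) (subset_closure (mem_ball_self hR))

theorem AnalyticOnNhd.sum_divisor_le_of_norm_le {f : ℂ → ℂ} {c : ℂ} {r R M : ℝ} (hr : 0 < r)
    (hrR : r < R) (hf : AnalyticOnNhd ℂ f (closedBall c R)) (hfc : f c ≠ 0)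
    (hM : ∀ z ∈ sphere c R, ‖f z‖ ≤ M) :
    ∑ᶠ u, divisor f (closedBall c r) u ≤ (Real.log M - Real.log ‖f c‖) / Real.log (R / r) := by
  have hR : 0 < R := hr.trans hrR
  have hfc_pos : 0 < ‖f c‖ := norm_pos_iff.mpr hfc
  have hM_pos : 0 < M := hfc_pos.trans_le
    (Complex.norm_le_of_forall_mem_sphere_norm_le hR hf.differentiableOn hM)
  have hjensen := AnalyticOnNhd.sum_divisor_le (f := (M⁻¹ : ℂ) • f) (r := r) (R := R) (M := 1)
    (by rwa [abs_of_pos hr]) (by rwa [abs_of_pos hr, abs_of_pos hR]) le_rfl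
    (by rw [abs_of_pos hR]; exact hf.const_smul)
    (by simp [hfc, hM_pos.ne'])
    (fun z hz ↦ by
      rw [abs_of_pos hR] at hz
      simpa [norm_smul, abs_of_pos hM_pos, inv_mul_le_one₀ hM_pos] using hM z hz)
  have hscaled : ‖((M⁻¹ : ℂ) • f) c‖ = ‖f c‖ / M := by
    simp [abs_of_pos hM_pos, div_eq_inv_mul]
  rwa [abs_of_pos hr, divisor_const_smul (by simp [hM_pos.ne'])
    (hf.meromorphicOn.mono_set (closedBall_subset_closedBall hrR.le)), hscaled, one_div_div,
    Real.log_div hM_pos.ne' hfc_pos.ne'] at hjensen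

theorem zero_count_le_of_jensen {f : ℂ → ℂ} {V : Set ℂ} (hV : IsOpen V)
    (z' : ℂ) (r : ℝ) (hr : 0 < r) (hball : closedBall z' (2 * r) ⊆ V)
    (hf : DifferentiableOn ℂ f V) (hfz' : f z' ≠ 0)
    (M : ℝ) (hM : ∀ z ∈ sphere z' (2 * r), ‖f z‖ ≤ M)
    (Z : Finset ℂ) (hZ : ↑Z ⊆ ball z' r) (m : ℂ → ℕ)
    (hmult : ∀ z ∈ Z, ∃ h : ℂ → ℂ, AnalyticAt ℂ h z ∧ h z ≠ 0 ∧
      ∀ᶠ w in nhds z, f w = (w - z) ^ (m z) * h w) :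
    (∑ z ∈ Z, (m z : ℝ)) ≤
      (Real.log M - Real.log ‖f z'‖) / Real.log 2 := by
  have hf_big : AnalyticOnNhd ℂ f (closedBall z' (2 * r)) := (hf.analyticOnNhd hV).mono hball
  have hf_small : AnalyticOnNhd ℂ f (closedBall z' r) :=
    hf_big.mono (closedBall_subset_closedBall (by linarith))
  have hdivisor : ∀ z ∈ Z, divisor f (closedBall z' r) z = m z := fun z hz ↦
    hf_small.divisor_apply_eq_natCast (ball_subset_closedBall (hZ hz)) (hmult z hz)
  have hjensen := hf_big.sum_divisor_le_of_norm_le hr (by linarith) hfz' hM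
  rw [mul_div_cancel_right₀ 2 hr.ne'] at hjensen
  calc (∑ z ∈ Z, (m z : ℝ)) = ((∑ z ∈ Z, (m z : ℤ) : ℤ) : ℝ) := by push_cast; rfl
    _ ≤ ((∑ᶠ u, divisor f (closedBall z' r) u : ℤ) : ℝ) :=
      Int.cast_le.mpr (hf_small.sum_le_finsum_divisor (isCompact_closedBall z' r) hdivisor)
    _ ≤ _ := hjensen
end
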